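/- Let X ∈ ℝ^{n×n}, Y ∈ ℝ^{m×n}, and κ̄ > 0. If the block matrix [[X + Xᵀ - I, Yᵀ], [Y, κ̄² I]] is positive definite, then X is invertible and the matrix K = Y X⁻¹ satisfies ‖K‖ ≤ κ̄ (spectral norm), equivalently Kᵀ K ⪯ κ̄² I. -/

import Mathlib

/-!
The top-left block `X + Xᵀ - I` is positive definite, hence so is `X + Xᵀ`, which forces `X` to
have trivial kernel. The Schur complement of `κ² I` gives `X + Xᵀ - I ⪰ κ⁻² YᵀY`; adding
`(X - I)ᵀ(X - I) = XᵀX - (X + Xᵀ - I) ⪰ 0` yields `κ² XᵀX ⪰ YᵀY`, and conjugating by `X⁻¹`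
gives `κ² I ⪰ (Y X⁻¹)ᵀ (Y X⁻¹)`.
-/

open Matrix
open scoped ComplexOrder

namespace Matrix

variable {𝕜 m n : Type*} [RCLike 𝕜] [Fintype m] [Fintype n]

theorem posSemidef_fromBlocks_smul_one_iff [DecidableEq m] (A : Matrix n n 𝕜)
    (Y : Matrix m n 𝕜) {c : 𝕜} (hc : 0 < c) :
    (fromBlocks A Yᴴ Y (c • 1)).PosSemidef ↔ (A - c⁻¹ • (Yᴴ * Y)).PosSemidef := by
  have hD : (c • 1 : Matrix m m 𝕜).PosDef := PosDef.one.smul hc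
  have : Invertible (c • 1 : Matrix m m 𝕜) := hD.isUnit.invertible
  have hinv : (c • 1 : Matrix m m 𝕜)⁻¹ = c⁻¹ • 1 :=
    inv_eq_right_inv (by rw [smul_mul_smul_comm, mul_inv_cancel₀ hc.ne', one_mul, one_smul])
  have := PosDef.fromBlocks₂₂ A Yᴴ hD
  rwa [conjTranspose_conjTranspose, hinv, Matrix.mul_smul, Matrix.mul_one, smul_mul] at this

theorem isUnit_of_posDef_add_conjTranspose [DecidableEq n] {X : Matrix n n 𝕜}
    (h : (X + Xᴴ).PosDef) : IsUnit X := by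
  rw [isUnit_iff_isUnit_det, isUnit_iff_ne_zero]
  intro hdet
  obtain ⟨v, hv, hXv⟩ := exists_mulVec_eq_zero_iff.2 hdet
  have hXadj : star v ⬝ᵥ Xᴴ *ᵥ v = 0 := by
    rw [dotProduct_mulVec, vecMul_conjTranspose, star_star, hXv, star_zero, zero_dotProduct]
  have := h.dotProduct_mulVec_pos hv
  rw [add_mulVec, dotProduct_add, hXv, dotProduct_zero, zero_add, hXadj] at this
  exact this.false

theorem conjTranspose_sub_one_mul_sub_one [DecidableEq n] (X : Matrix n n 𝕜) :
    (X - 1)ᴴ * (X - 1) = Xᴴ * X - (X + Xᴴ - 1) := by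
  simp only [conjTranspose_sub, conjTranspose_one, sub_mul, mul_sub, one_mul, mul_one]
  abel

theorem posSemidef_smul_conjTranspose_mul_self_sub [DecidableEq n] {X : Matrix n n 𝕜}
    {Y : Matrix m n 𝕜} {c : 𝕜} (hc : 0 < c) (h : (X + Xᴴ - 1 - c⁻¹ • (Yᴴ * Y)).PosSemidef) :
    (c • (Xᴴ * X) - Yᴴ * Y).PosSemidef := by
  have key : c • (Xᴴ * X) - Yᴴ * Y
      = c • ((X - 1)ᴴ * (X - 1) + (X + Xᴴ - 1 - c⁻¹ • (Yᴴ * Y))) := by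
    simp only [conjTranspose_sub_one_mul_sub_one, smul_add, smul_sub, smul_smul,
      mul_inv_cancel₀ hc.ne', one_smul]
    abel
  rw [key]
  exact ((posSemidef_conjTranspose_mul_self _).add h).smul hc.le

theorem posSemidef_smul_one_sub_of_isUnit [DecidableEq n] {X : Matrix n n 𝕜}
    {Y : Matrix m n 𝕜} {c : 𝕜} (hX : IsUnit X) (h : (c • (Xᴴ * X) - Yᴴ * Y).PosSemidef) :
    (c • 1 - (Y * X⁻¹)ᴴ * (Y * X⁻¹)).PosSemidef := by
  have hXX : X * X⁻¹ = 1 := mul_nonsing_inv X ((isUnit_iff_isUnit_det X).1 hX)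
  convert h.conjTranspose_mul_mul_same X⁻¹ using 1
  simp only [mul_sub, sub_mul, Matrix.mul_smul, smul_mul, conjTranspose_mul, Matrix.mul_assoc,
    hXX, mul_one]
  rw [← conjTranspose_mul, hXX, conjTranspose_one]

end Matrix

/-- If `[[X + Xᵀ - I, Yᵀ], [Y, κ̄² I]] ≻ 0` with `κ̄ > 0`, then `X` is invertible
and `K = Y X⁻¹` satisfies `Kᵀ K ⪯ κ̄² I` (i.e. `‖K‖ ≤ κ̄` in spectral norm). -/
theorem stmt12 (n m : ℕ) (X : Matrix (Fin n) (Fin n) ℝ) (Y : Matrix (Fin m) (Fin n) ℝ)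
    (κ : ℝ) (hκ : 0 < κ)
    (h : (Matrix.fromBlocks (X + Xᵀ - 1) Yᵀ Y (κ ^ 2 • (1 : Matrix (Fin m) (Fin m) ℝ))).PosDef) :
    IsUnit X ∧ (κ ^ 2 • (1 : Matrix (Fin n) (Fin n) ℝ) - (Y * X⁻¹)ᵀ * (Y * X⁻¹)).PosSemidef := by
  simp only [← conjTranspose_eq_transpose_of_trivial] at h ⊢
  have hκ2 : 0 < κ ^ 2 := by positivity
  -- the principal submatrix on `Sum.inl` is the top-left block
  have hA : (X + Xᴴ - 1).PosDef := h.submatrix Sum.inl_injective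
  have hX : IsUnit X :=
    isUnit_of_posDef_add_conjTranspose (by simpa using hA.add_posSemidef PosSemidef.one)
  have hSchur := (posSemidef_fromBlocks_smul_one_iff _ Y hκ2).1 h.posSemidef
  exact ⟨hX, posSemidef_smul_one_sub_of_isUnit hX
    (posSemidef_smul_conjTranspose_mul_self_sub hκ2 hSchur)⟩
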